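/- arXiv:2406.04422 — 2 statements merged into one kernel-verified Lean document; each statement's English description precedes it below -/
import Mathlib

section
/- Let g : [τ, s] → ℝ≥0 be continuous with g(s') ≤ e^{-(3/2)(s'-τ)} g(τ) + ∫_τ^{s'} e^{-(3/2)(s'-σ)} ( A² σ^{-3} log σ + C σ^{-2} + C A σ^{-2} + C e^{-σ/2} ) dσ for all s' ∈ [τ, s], where 1 ≤ τ ≤ s ≤ 2τ and A ≥ 1. Then g(s) ≤ e^{-(3/4)(s-τ)} g(τ) + C' A² / s² for a universal constant C'. -/
/-!
On `[τ, s]` with `1 ≤ τ ≤ s ≤ 2τ` every source term is `O(A² / σ²)` with `σ ≥ s / 2`,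
hence `O(A² / s²)` (the term `e^{-σ/2}` through `e^{σ/2} ≥ σ² / 8`). The kernel
`e^{-(3/2)(s-σ)}` has integral at most `2/3`, so the Duhamel integral is `O(A² / s²)`, and the
homogeneous part `e^{-(3/2)(s-τ)} g(τ)` is trivially at most `e^{-(3/4)(s-τ)} g(τ)`.
-/

open Real Set MeasureTheory intervalIntegral

theorem integral_exp_neg_mul_sub (a τ s : ℝ) (ha : a ≠ 0) :
    ∫ σ in τ..s, exp (-a * (s - σ)) = (1 - exp (-a * (s - τ))) / a := by
  have hderiv : ∀ σ ∈ uIcc τ s,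
      HasDerivAt (fun x => exp (-a * (s - x)) / a) (exp (-a * (s - σ))) σ := by
    intro σ _
    have h := ((((hasDerivAt_id' σ).const_sub s).const_mul (-a)).exp).div_const a
    refine h.congr_deriv ?_
    field_simp
  rw [integral_eq_sub_of_hasDerivAt hderiv (by apply Continuous.intervalIntegrable; fun_prop)]
  simp only [sub_self, mul_zero, exp_zero]
  ring

theorem exp_neg_half_le (σ : ℝ) (hσ : 0 < σ) : exp (-σ / 2) ≤ 8 / σ ^ 2 := by
  have hquad : σ ^ 2 / 8 ≤ exp (σ / 2) := by
    nlinarith [quadratic_le_exp_of_nonneg (by positivity : 0 ≤ σ / 2)]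
  rw [neg_div, exp_neg, le_div_iff₀ (by positivity)]
  calc (exp (σ / 2))⁻¹ * σ ^ 2 = 8 * ((σ ^ 2 / 8) / exp (σ / 2)) := by field_simp
    _ ≤ 8 * 1 := by gcongr; exact div_le_one_of_le₀ hquad (exp_pos _).le
    _ = 8 := by ring

theorem integral_exp_decay_mul_le {a M τ s : ℝ} {f : ℝ → ℝ} (ha : 0 < a) (hM : 0 ≤ M)
    (hτs : τ ≤ s) (hf : IntervalIntegrable f volume τ s)
    (hfM : ∀ σ ∈ Icc τ s, f σ ≤ M) :
    ∫ σ in τ..s, exp (-a * (s - σ)) * f σ ≤ M / a := by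
  have hkernel : Continuous fun σ => exp (-a * (s - σ)) := by fun_prop
  calc ∫ σ in τ..s, exp (-a * (s - σ)) * f σ
      ≤ ∫ σ in τ..s, exp (-a * (s - σ)) * M :=
        integral_mono_on hτs (hf.continuousOn_mul hkernel.continuousOn)
          ((hkernel.mul continuous_const).intervalIntegrable τ s)
          fun σ hσ => mul_le_mul_of_nonneg_left (hfM σ hσ) (exp_pos _).le
    _ = (1 - exp (-a * (s - τ))) / a * M := by
        rw [intervalIntegral.integral_mul_const, integral_exp_neg_mul_sub a τ s ha.ne']
    _ ≤ M / a := by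
        rw [div_mul_eq_mul_div]
        gcongr
        nlinarith [exp_pos (-a * (s - τ))]

theorem le_of_duhamel {a b M τ s g₀ g₁ : ℝ} {f : ℝ → ℝ} (ha : 0 < a) (hba : b ≤ a)
    (hM : 0 ≤ M) (hτs : τ ≤ s) (hg₀ : 0 ≤ g₀) (hf : IntervalIntegrable f volume τ s)
    (hfM : ∀ σ ∈ Icc τ s, f σ ≤ M)
    (h : g₁ ≤ exp (-a * (s - τ)) * g₀ + ∫ σ in τ..s, exp (-a * (s - σ)) * f σ) :
    g₁ ≤ exp (-b * (s - τ)) * g₀ + M / a := by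
  have hdecay : exp (-a * (s - τ)) ≤ exp (-b * (s - τ)) :=
    exp_le_exp.mpr (by nlinarith)
  linarith [mul_le_mul_of_nonneg_right hdecay hg₀, integral_exp_decay_mul_le ha hM hτs hf hfM]

noncomputable def negativePartSource (A C σ : ℝ) : ℝ :=
  A ^ 2 / σ ^ 3 * log σ + C / σ ^ 2 + C * A / σ ^ 2 + C * exp (-σ / 2)

theorem continuousOn_negativePartSource (A C : ℝ) :
    ContinuousOn (negativePartSource A C) (Ioi 0) := by
  unfold negativePartSource
  fun_prop (disch := intro; simp_all [ne_of_gt])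

theorem negativePartSource_le {A C σ : ℝ} (hA : 1 ≤ A) (hC : 0 ≤ C) (hσ : 1 ≤ σ) :
    negativePartSource A C σ ≤ (1 + 10 * C) * A ^ 2 / σ ^ 2 := by
  have hσ₀ : 0 < σ := by linarith
  have hAA : A ≤ A ^ 2 := by nlinarith
  have hlog : A ^ 2 / σ ^ 3 * log σ ≤ A ^ 2 / σ ^ 2 := by
    calc A ^ 2 / σ ^ 3 * log σ ≤ A ^ 2 / σ ^ 3 * σ := by
          gcongr; exact log_le_self hσ₀.le
      _ = A ^ 2 / σ ^ 2 := by field_simp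
  have hexp : C * exp (-σ / 2) ≤ 8 * C * A ^ 2 / σ ^ 2 := by
    calc C * exp (-σ / 2) ≤ C * (8 / σ ^ 2) := by gcongr; exact exp_neg_half_le σ hσ₀
      _ = 8 * C * 1 / σ ^ 2 := by ring
      _ ≤ 8 * C * A ^ 2 / σ ^ 2 := by gcongr; nlinarith
  have hC₁ : C / σ ^ 2 ≤ C * A ^ 2 / σ ^ 2 := by gcongr; nlinarith
  have hCA : C * A / σ ^ 2 ≤ C * A ^ 2 / σ ^ 2 := by gcongr
  unfold negativePartSource
  have : (1 + 10 * C) * A ^ 2 / σ ^ 2 =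
      A ^ 2 / σ ^ 2 + C * A ^ 2 / σ ^ 2 + C * A ^ 2 / σ ^ 2 + 8 * C * A ^ 2 / σ ^ 2 := by ring
  linarith

theorem negativePartSource_le_of_two_mul_ge {A C σ s : ℝ} (hA : 1 ≤ A) (hC : 0 ≤ C)
    (hσ : 1 ≤ σ) (hs₀ : 0 < s) (hs : s ≤ 2 * σ) :
    negativePartSource A C σ ≤ 4 * (1 + 10 * C) * A ^ 2 / s ^ 2 := by
  calc negativePartSource A C σ ≤ (1 + 10 * C) * A ^ 2 / σ ^ 2 :=
        negativePartSource_le hA hC hσ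
    _ = 4 * (1 + 10 * C) * A ^ 2 / (2 * σ) ^ 2 := by ring
    _ ≤ 4 * (1 + 10 * C) * A ^ 2 / s ^ 2 := by gcongr

/-- Duhamel-type estimate for the negative spectral part: the integral inequality
with decay `e^{-3(s'-τ)/2}` and the listed sources implies
`g(s) ≤ e^{-3(s-τ)/4} g(τ) + C' A²/s²` when `τ ≤ s ≤ 2τ`. -/
theorem negative_part_estimate (C : ℝ) (hC : 0 < C) :
    ∃ C' > 0, ∀ (A τ s : ℝ) (g : ℝ → ℝ),
      1 ≤ A → 1 ≤ τ → τ ≤ s → s ≤ 2 * τ →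
      ContinuousOn g (Set.Icc τ s) →
      (∀ x ∈ Set.Icc τ s, 0 ≤ g x) →
      (∀ s' ∈ Set.Icc τ s,
        g s' ≤ Real.exp (-(3 / 2) * (s' - τ)) * g τ +
          ∫ σ in τ..s', Real.exp (-(3 / 2) * (s' - σ)) *
            (A ^ 2 / σ ^ 3 * Real.log σ + C / σ ^ 2 + C * A / σ ^ 2 +
              C * Real.exp (-σ / 2))) →
      g s ≤ Real.exp (-(3 / 4) * (s - τ)) * g τ + C' * A ^ 2 / s ^ 2 := by
  refine ⟨8 / 3 * (1 + 10 * C), by positivity, fun A τ s g hA hτ hτs hs _ hg hduhamel => ?_⟩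
  have hsource_int : IntervalIntegrable (negativePartSource A C) volume τ s :=
    ((continuousOn_negativePartSource A C).mono fun σ hσ =>
      mem_Ioi.mpr (one_pos.trans_le (hτ.trans hσ.1))).intervalIntegrable_of_Icc hτs
  have hsource_le :
      ∀ σ ∈ Icc τ s, negativePartSource A C σ ≤ 4 * (1 + 10 * C) * A ^ 2 / s ^ 2 :=
    fun σ hσ => negativePartSource_le_of_two_mul_ge hA hC.le (hτ.trans hσ.1) (by linarith)
      (by linarith [hσ.1])
  have hdecay := le_of_duhamel (b := 3 / 4) (by norm_num) (by norm_num) (by positivity) hτs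
    (hg τ (left_mem_Icc.mpr hτs)) hsource_int hsource_le (hduhamel s (right_mem_Icc.mpr hτs))
  exact hdecay.trans_eq (by ring)
end

section
/- Let g : [τ, s] → ℝ≥0 be continuous satisfying g(s') ≤ e^{-(s'-τ)/(p-1)} g(τ) + ∫_τ^{s'} e^{-(s'-σ)/(p-1)} [ (1/(2(p-1))) g(σ) + C A²/√σ + (A²/σ)(1 - e^{-(s'-σ)})^{-1/2} ] dσ for all s' ∈ [τ, s], where p > 1, 1 ≤ τ ≤ s, A ≥ 1. Then g(s) ≤ e^{-(s-τ)/(2(p-1))} g(τ) + C' A² τ^{-1/2} (1 + s - τ) for a constant C' depending only on p and C. -/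
/-!
Write `q = p - 1`. Multiplying the Duhamel inequality by `e^{(t-τ)/q}` turns it into the linear
Gronwall inequality `φ t ≤ g τ + B e^{(t-τ)/q} + (1/(2q)) ∫_τ^t φ` for `φ t = e^{(t-τ)/q} g t`,
once the two sources are bounded by a constant `B`. Gronwall lets `φ` grow at most like
`g τ e^{(t-τ)/(2q)} + 2B e^{(t-τ)/q}`; removing the weight leaves the decay rate `1/(2q)` and the
source contribution `2B`.

Since the bound may grow linearly in `s - τ`, the sources need no damping: for `σ ≥ τ ≥ 1`,
`A²/σ ≤ A²/√σ ≤ A²/√τ`, and `1 - e^{-u} ≥ u/(1+u)` gives `(1 - e^{-u})^{-1/2} ≤ 1 + u^{-1/2}`,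
whose integral over `[0, s - τ]` is `(s - τ) + 2√(s - τ)`. So `B = (C + 2) A² τ^{-1/2} (1 + s - τ)`
will do.
-/

open Real Set MeasureTheory intervalIntegral

theorem hasDerivAt_exp_mul_sub (c τ t : ℝ) :
    HasDerivAt (fun t => exp (c * (t - τ))) (c * exp (c * (t - τ))) t := by
  have hlin : HasDerivAt (fun t => c * (t - τ)) c t := by
    simpa using ((hasDerivAt_id t).sub_const τ).const_mul c
  exact hlin.exp.congr_deriv (mul_comm _ _)

theorem hasDerivAt_exp_primitive {κ r a B τ : ℝ} (hκ : κ ≠ 0) (hr : r ≠ 0) (t : ℝ) :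
    HasDerivAt (fun t => -(a / κ) * exp (-κ * (t - τ)) + B / r * exp (r * (t - τ)))
      (exp (-κ * (t - τ)) * (a + B * exp ((κ + r) * (t - τ)))) t := by
  refine (((hasDerivAt_exp_mul_sub (-κ) τ t).const_mul (-(a / κ))).add
    ((hasDerivAt_exp_mul_sub r τ t).const_mul (B / r))).congr_deriv ?_
  rw [mul_add, ← mul_assoc, mul_left_comm _ B, ← exp_add]
  field_simp
  ring_nf

theorem exp_mul_integral_le_sub_of_le_add_mul_integral {φ f F : ℝ → ℝ} {K a b : ℝ} (hab : a ≤ b)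
    (hφ : ContinuousOn φ (Icc a b)) (hF : ContinuousOn F (Icc a b))
    (hF' : ∀ t ∈ Ioo a b, HasDerivAt F (exp (-K * (t - a)) * f t) t)
    (h : ∀ t ∈ Ioo a b, φ t ≤ f t + K * ∫ σ in a..t, φ σ) :
    exp (-K * (b - a)) * (∫ σ in a..b, φ σ) ≤ F b - F a := by
  set G := fun t => ∫ σ in a..t, φ σ
  have hG : ContinuousOn G (Icc a b) := by
    simpa only [uIcc_of_le hab] using
      continuousOn_primitive_interval (μ := volume)
        (hφ.integrableOn_Icc.mono_set (uIcc_of_le hab).subset)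
  have hG' : ∀ t ∈ Ioo a b, HasDerivAt G (φ t) t := fun t ht =>
    integral_hasDerivAt_right
      ((hφ.mono (Icc_subset_Icc_right ht.2.le)).intervalIntegrable_of_Icc ht.1.le)
      (hφ.mono Ioo_subset_Icc_self |>.stronglyMeasurableAtFilter isOpen_Ioo t ht)
      (hφ.continuousAt (Icc_mem_nhds ht.1 ht.2))
  have hW : AntitoneOn (fun t => exp (-K * (t - a)) * G t - F t) (Icc a b) := by
    refine antitoneOn_of_hasDerivWithinAt_nonpos
      (f' := fun t => -K * exp (-K * (t - a)) * G t + exp (-K * (t - a)) * φ t -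
        exp (-K * (t - a)) * f t) (convex_Icc a b)
      ((by fun_prop : Continuous fun t => exp (-K * (t - a))).continuousOn.mul hG |>.sub hF)
      (fun t ht => ?_) (fun t ht => ?_)
    · rw [interior_Icc] at ht
      exact (((hasDerivAt_exp_mul_sub (-K) a t).mul (hG' t ht)).sub
        (hF' t ht)).hasDerivWithinAt
    · rw [interior_Icc] at ht
      have := mul_le_mul_of_nonneg_left (h t ht) (exp_pos (-K * (t - a))).le
      simp only [G]
      linarith
  have := hW (left_mem_Icc.2 hab) (right_mem_Icc.2 hab) hab
  simp only [G, sub_self, mul_zero, exp_zero, integral_same] at this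
  linarith

theorem le_add_exp_of_le_add_exp_add_mul_integral {q κ a B τ s : ℝ} {φ : ℝ → ℝ} (hq : 0 < q)
    (hκ : 0 < κ) (hκq : κ * q < 1) (hB : 0 ≤ B) (hτs : τ ≤ s) (hφ : ContinuousOn φ (Icc τ s))
    (h : ∀ t ∈ Icc τ s, φ t ≤ a + B * exp ((t - τ) / q) + κ * ∫ σ in τ..t, φ σ) :
    φ s ≤ a * exp (κ * (s - τ)) + B / (1 - κ * q) * exp ((s - τ) / q) := by
  set r := 1 / q - κ
  have hr : 0 < r := by
    simp only [r, sub_pos, lt_div_iff₀ hq]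
    linarith
  set F := fun t => -(a / κ) * exp (-κ * (t - τ)) + B / r * exp (r * (t - τ))
  have hF' : ∀ t, HasDerivAt F (exp (-κ * (t - τ)) * (a + B * exp ((t - τ) / q))) t := by
    intro t
    have hrate : (κ + r) * (t - τ) = (t - τ) / q := by simp only [r]; ring
    simpa only [hrate] using hasDerivAt_exp_primitive (a := a) (B := B) (τ := τ) hκ.ne' hr.ne' t
  have hI := exp_mul_integral_le_sub_of_le_add_mul_integral hτs hφ
    (continuous_iff_continuousAt.2 fun t => (hF' t).continuousAt).continuousOn
    (fun t _ => hF' t) (fun t ht => h t (Ioo_subset_Icc_self ht))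
  set T := s - τ with hT
  have e1 : exp (κ * T) * exp (-κ * T) = 1 := by rw [← exp_add]; ring_nf; exact exp_zero
  have e2 : exp (κ * T) * exp (r * T) = exp (T / q) := by
    rw [← exp_add]; congr 1; simp only [r]; ring
  have hIs : κ * ∫ σ in τ..s, φ σ ≤ -a + κ * B / r * exp (T / q) + a * exp (κ * T)
      - κ * B / r * exp (κ * T) := by
    have hval : κ * (exp (κ * T) * (F s - F τ)) =
        -a + κ * B / r * exp (T / q) + a * exp (κ * T) - κ * B / r * exp (κ * T) := by
      simp only [F, ← hT, sub_self, mul_zero, exp_zero, mul_one]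
      have hκa : κ * (a / κ) = a := mul_div_cancel₀ a hκ.ne'
      linear_combination
        (exp (κ * T) - exp (κ * T) * exp (-κ * T)) * hκa - a * e1 + κ * B / r * e2
    rw [← hval]
    gcongr
    calc _ = exp (κ * T) * (exp (-κ * T) * ∫ σ in τ..s, φ σ) := by
          rw [← mul_assoc, e1, one_mul]
      _ ≤ _ := mul_le_mul_of_nonneg_left hI (exp_pos _).le
  have hcoef : B / (1 - κ * q) = B + κ * B / r := by
    have hrq : 1 - κ * q = q * r := by simp only [r]; field_simp
    rw [hrq]; field_simp; simp only [r]; field_simp; ring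
  have hs := h s (right_mem_Icc.2 hτs)
  have hdrop : 0 ≤ κ * B / r * exp (κ * T) := by positivity
  rw [hcoef]
  linarith

theorem exp_mul_le_of_le_damped_duhamel {q κ a B τ t : ℝ} {g : ℝ → ℝ}
    (h : g t ≤ exp (-(t - τ) / q) * a + κ * (∫ σ in τ..t, exp (-(t - σ) / q) * g σ) + B) :
    exp ((t - τ) / q) * g t ≤
      a + B * exp ((t - τ) / q) + κ * ∫ σ in τ..t, exp ((σ - τ) / q) * g σ := by
  have hweight : exp ((t - τ) / q) * ∫ σ in τ..t, exp (-(t - σ) / q) * g σ =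
      ∫ σ in τ..t, exp ((σ - τ) / q) * g σ := by
    rw [← intervalIntegral.integral_const_mul]
    refine integral_congr fun σ _ => ?_
    simp only [← mul_assoc, ← exp_add]
    ring_nf
  have hcancel : exp ((t - τ) / q) * exp (-(t - τ) / q) = 1 := by
    rw [← exp_add, ← add_div, add_neg_cancel, zero_div, exp_zero]
  rw [← hweight]
  linear_combination mul_le_mul_of_nonneg_left h (exp_pos ((t - τ) / q)).le + a * hcancel

theorem le_exp_add_of_le_damped_duhamel {q κ a B τ s : ℝ} {g : ℝ → ℝ} (hq : 0 < q) (hκ : 0 < κ)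
    (hκq : κ * q < 1) (hB : 0 ≤ B) (hτs : τ ≤ s) (hg : ContinuousOn g (Icc τ s))
    (h : ∀ t ∈ Icc τ s,
      g t ≤ exp (-(t - τ) / q) * a + κ * (∫ σ in τ..t, exp (-(t - σ) / q) * g σ) + B) :
    g s ≤ exp (-(1 / q - κ) * (s - τ)) * a + B / (1 - κ * q) := by
  have hφ := le_add_exp_of_le_add_exp_add_mul_integral (φ := fun t => exp ((t - τ) / q) * g t)
    hq hκ hκq hB hτs (by fun_prop) fun t ht => exp_mul_le_of_le_damped_duhamel (h t ht)
  have e1 : exp (-(s - τ) / q) * exp ((s - τ) / q) = 1 := by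
    rw [← exp_add, neg_div, neg_add_cancel, exp_zero]
  have e2 : exp (-(s - τ) / q) * exp (κ * (s - τ)) = exp (-(1 / q - κ) * (s - τ)) := by
    rw [← exp_add]; congr 1; ring
  linear_combination mul_le_mul_of_nonneg_left hφ (exp_pos (-(s - τ) / q)).le +
    -(g s) * e1 + a * e2 + B / (1 - κ * q) * e1

theorem one_sub_exp_neg_rpow_le {u : ℝ} (hu : 0 ≤ u) :
    (1 - exp (-u)) ^ (-(1 / 2) : ℝ) ≤ 1 + u ^ (-(1 / 2) : ℝ) := by
  rcases hu.eq_or_lt with rfl | hu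
  · simp
  have hy : u / (1 + u) ≤ 1 - exp (-u) := by
    rw [exp_neg, div_le_iff₀ (by positivity)]
    have hexp := add_one_le_exp u
    field_simp
    nlinarith [exp_pos u]
  have hy0 : 0 < 1 - exp (-u) := (div_pos hu (by positivity)).trans_le hy
  rw [rpow_neg hy0.le, rpow_neg hu.le, ← sqrt_eq_rpow, ← sqrt_eq_rpow]
  have ha := sq_sqrt hy0.le
  have hb := sq_sqrt hu.le
  have ha0 := sqrt_pos.2 hy0
  have hb0 := sqrt_pos.2 hu
  rw [div_le_iff₀ (by positivity)] at hy
  rw [inv_le_iff_one_le_mul₀ ha0]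
  field_simp
  nlinarith [mul_pos ha0 hb0]

theorem integral_sub_rpow_neg_half (a b : ℝ) :
    ∫ σ in a..b, (b - σ) ^ (-(1 / 2) : ℝ) = 2 * √(b - a) := by
  rw [integral_comp_sub_left (fun x => x ^ (-(1 / 2) : ℝ)), sub_self,
    integral_rpow (Or.inl (by norm_num)), sqrt_eq_rpow]
  norm_num
  ring

theorem damped_source_mem_Icc {q C A τ σ t : ℝ} (hq : 0 ≤ q) (hC : 0 ≤ C) (hτ : 1 ≤ τ)
    (hτσ : τ ≤ σ) (hσt : σ ≤ t) :
    exp (-(t - σ) / q) * (C * A ^ 2 / √σ + A ^ 2 / σ * (1 - exp (-(t - σ))) ^ (-(1 / 2) : ℝ)) ∈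
      Icc 0 (A ^ 2 / √τ * (C + 1 + (t - σ) ^ (-(1 / 2) : ℝ))) := by
  have hσ : 1 ≤ σ := hτ.trans hτσ
  have hkernel := one_sub_exp_neg_rpow_le (sub_nonneg.2 hσt)
  have hkernel0 : 0 ≤ (1 - exp (-(t - σ))) ^ (-(1 / 2) : ℝ) :=
    rpow_nonneg (sub_nonneg.2 (exp_le_one_iff.2 (by linarith))) _
  have hdecay : exp (-(t - σ) / q) ≤ 1 :=
    exp_le_one_iff.2 (div_nonpos_of_nonpos_of_nonneg (by linarith) hq)
  have hsqrt : √τ ≤ √σ := sqrt_le_sqrt hτσ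
  have hsqrt_le : √σ ≤ σ := by nlinarith [sq_sqrt (zero_le_one.trans hσ), one_le_sqrt.2 hσ]
  have hsource0 : 0 ≤ C * A ^ 2 / √σ + A ^ 2 / σ * (1 - exp (-(t - σ))) ^ (-(1 / 2) : ℝ) := by
    positivity
  refine ⟨mul_nonneg (exp_pos _).le hsource0, ?_⟩
  calc _ ≤ 1 * (C * A ^ 2 / √σ + A ^ 2 / σ * (1 - exp (-(t - σ))) ^ (-(1 / 2) : ℝ)) := by
        gcongr
    _ ≤ C * A ^ 2 / √τ + A ^ 2 / √τ * (1 + (t - σ) ^ (-(1 / 2) : ℝ)) := by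
        rw [one_mul]
        have hτ_sqrt : 0 < √τ := sqrt_pos.2 (by linarith)
        gcongr
        exact hsqrt.trans hsqrt_le
    _ = _ := by ring

theorem integral_damped_duhamel_le {q κ C A τ t : ℝ} {g : ℝ → ℝ} (hq : 0 ≤ q) (hC : 0 ≤ C)
    (hτ : 1 ≤ τ) (hτt : τ ≤ t) (hg : ContinuousOn g (Icc τ t)) :
    ∫ σ in τ..t, exp (-(t - σ) / q) *
        (κ * g σ + C * A ^ 2 / √σ + A ^ 2 / σ * (1 - exp (-(t - σ))) ^ (-(1 / 2) : ℝ)) ≤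
      κ * (∫ σ in τ..t, exp (-(t - σ) / q) * g σ) + (C + 2) * A ^ 2 / √τ * (1 + (t - τ)) := by
  set S := fun σ => exp (-(t - σ) / q) *
    (C * A ^ 2 / √σ + A ^ 2 / σ * (1 - exp (-(t - σ))) ^ (-(1 / 2) : ℝ))
  set M := fun σ => A ^ 2 / √τ * (C + 1 + (t - σ) ^ (-(1 / 2) : ℝ))
  have hkernel : IntervalIntegrable (fun σ => (t - σ) ^ (-(1 / 2) : ℝ)) volume τ t := by
    simpa only [sub_sub_cancel, sub_zero] using
      (intervalIntegrable_rpow' (a := t - τ) (b := 0) (by norm_num)).comp_sub_left t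
  have hM : IntervalIntegrable M volume τ t := (intervalIntegrable_const.add hkernel).const_mul _
  have hS : IntervalIntegrable S volume τ t := by
    refine hM.mono_fun' (by fun_prop : Measurable S).aestronglyMeasurable ?_
    filter_upwards [ae_restrict_mem measurableSet_uIoc] with σ hσ
    rw [uIoc_of_le hτt] at hσ
    obtain ⟨h0, hle⟩ := damped_source_mem_Icc (A := A) hq hC hτ hσ.1.le hσ.2
    rwa [norm_of_nonneg h0]
  have hE : IntervalIntegrable (fun σ => exp (-(t - σ) / q) * g σ) volume τ t :=
    ((by fun_prop : Continuous fun σ => exp (-(t - σ) / q)).continuousOn.mul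
      hg).intervalIntegrable_of_Icc hτt
  calc _ = κ * (∫ σ in τ..t, exp (-(t - σ) / q) * g σ) + ∫ σ in τ..t, S σ := by
        rw [← intervalIntegral.integral_const_mul, ← integral_add (hE.const_mul κ) hS]
        exact integral_congr fun σ _ => by simp only [S]; ring
    _ ≤ κ * (∫ σ in τ..t, exp (-(t - σ) / q) * g σ) + ∫ σ in τ..t, M σ := by
        gcongr
        exact integral_mono_on hτt hS hM fun σ hσ =>
          (damped_source_mem_Icc hq hC hτ hσ.1 hσ.2).2
    _ = κ * (∫ σ in τ..t, exp (-(t - σ) / q) * g σ) +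
          A ^ 2 / √τ * ((C + 1) * (t - τ) + 2 * √(t - τ)) := by
        rw [intervalIntegral.integral_const_mul, integral_add intervalIntegrable_const hkernel,
          intervalIntegral.integral_const, integral_sub_rpow_neg_half, smul_eq_mul]
        ring
    _ ≤ κ * (∫ σ in τ..t, exp (-(t - σ) / q) * g σ) +
          A ^ 2 / √τ * ((C + 2) * (1 + (t - τ))) := by
        gcongr
        have hT := sub_nonneg.2 hτt
        nlinarith [sq_sqrt hT, sq_nonneg (√(t - τ) - 1)]
    _ = _ := by ring

/-- Gronwall estimate for the outer part `q_e`: the Duhamel inequality with decay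
`e^{-(s'-τ)/(p-1)}`, absorbable term `g/(2(p-1))` and the listed sources implies
`g(s) ≤ e^{-(s-τ)/(2(p-1))} g(τ) + C' A² τ^{-1/2}(1+s-τ)`. -/
theorem outer_part_estimate (p C : ℝ) (hp : 1 < p) (hC : 0 < C) :
    ∃ C' > 0, ∀ (A τ s : ℝ) (g : ℝ → ℝ),
      1 ≤ A → 1 ≤ τ → τ ≤ s →
      ContinuousOn g (Set.Icc τ s) →
      (∀ x ∈ Set.Icc τ s, 0 ≤ g x) →
      (∀ s' ∈ Set.Icc τ s,
        g s' ≤ Real.exp (-(s' - τ) / (p - 1)) * g τ +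
          ∫ σ in τ..s', Real.exp (-(s' - σ) / (p - 1)) *
            ((1 / (2 * (p - 1))) * g σ + C * A ^ 2 / Real.sqrt σ +
              (A ^ 2 / σ) * (1 - Real.exp (-(s' - σ))) ^ (-(1 / 2) : ℝ))) →
      g s ≤ Real.exp (-(s - τ) / (2 * (p - 1))) * g τ +
        C' * A ^ 2 / Real.sqrt τ * (1 + s - τ) := by
  have hq : 0 < p - 1 := by linarith
  refine ⟨2 * (C + 2), by positivity, fun A τ s g _ hτ hτs hg _ hduhamel => ?_⟩
  set B := (C + 2) * A ^ 2 / √τ * (1 + (s - τ))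
  have hsourced : ∀ t ∈ Icc τ s, g t ≤ exp (-(t - τ) / (p - 1)) * g τ +
      1 / (2 * (p - 1)) * (∫ σ in τ..t, exp (-(t - σ) / (p - 1)) * g σ) + B := by
    intro t ht
    have hB : (C + 2) * A ^ 2 / √τ * (1 + (t - τ)) ≤ B := by
      have hτ_sqrt : 0 < √τ := sqrt_pos.2 (by linarith)
      simp only [B]
      gcongr
      exact ht.2
    linarith [hduhamel t ht, integral_damped_duhamel_le (A := A) (κ := 1 / (2 * (p - 1))) hq.le
      hC.le hτ ht.1 (hg.mono (Icc_subset_Icc_right ht.2))]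
  have hκq : 1 / (2 * (p - 1)) * (p - 1) = 1 / 2 := by field_simp
  have hrate : -(1 / (p - 1) - 1 / (2 * (p - 1))) * (s - τ) = -(s - τ) / (2 * (p - 1)) := by
    field_simp; ring
  have hgronwall := le_exp_add_of_le_damped_duhamel hq (by positivity) (by linarith)
    (by positivity) hτs hg hsourced
  have hgain : B / (1 - 1 / 2) = 2 * (C + 2) * A ^ 2 / √τ * (1 + s - τ) := by
    simp only [B]; ring
  rwa [hκq, hrate, hgain] at hgronwall
end
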